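/- arXiv:2602.03450 — 4 statements merged into one kernel-verified Lean document; each statement's English description precedes it below -/
import Mathlib

section
/- Let A be a commutative ring with identity. Define on the set 1 + A[[t]]^+ of power series with constant term 1 the operations: addition given by multiplication of power series, and multiplication given by (1 + Σ aₙtⁿ) ×̃ (1 + Σ bₙtⁿ) = 1 + Σ Pₙ(a₁,…,aₙ; b₁,…,bₙ) tⁿ, where Pₙ is the universal polynomial such that Pₙ(s₁,…,sₙ; σ₁,…,σₙ) is the coefficient of tⁿ in ∏_{i,j}(1 + ξᵢζⱼt), with sᵢ, σᵢ the elementary symmetric polynomials in the ξ's and ζ's. Then these operations make 1 + A[[t]]^+ into a commutative ring with zero element 1 and multiplicative identity 1 + t. -/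
/-- The `k`-th elementary symmetric function of the family `ξ`. -/
def esymmF {R : Type} [CommRing R] {q : ℕ} (k : ℕ) (ξ : Fin q → R) : R :=
  ∑ s ∈ Finset.powersetCard k Finset.univ, ∏ i ∈ s, ξ i

/-- `P` is the family of universal polynomials `Pₙ` such that
`Pₙ(s₁,…,sₙ; σ₁,…,σₙ)` is the coefficient of `tⁿ` in `∏_{i,j} (1 + ξᵢζⱼ t)`,
where `sᵢ`, `σᵢ` are the elementary symmetric functions of the `ξ`'s and `ζ`'s
(for any `q, r ≥ n` and any values in any commutative ring). -/
def IsWittMulFamily (P : ∀ n : ℕ, MvPolynomial (Fin n ⊕ Fin n) ℤ) : Prop :=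
  ∀ (S : Type) [CommRing S], ∀ (n q r : ℕ), n ≤ q → n ≤ r →
    ∀ (ξ : Fin q → S) (ζ : Fin r → S),
      MvPolynomial.eval₂ (Int.castRingHom S)
          (Sum.elim (fun i : Fin n => esymmF ((i : ℕ) + 1) ξ) fun j : Fin n => esymmF ((j : ℕ) + 1) ζ)
          (P n)
        = (∏ i : Fin q, ∏ j : Fin r,
            (1 + Polynomial.C (ξ i * ζ j) * Polynomial.X)).coeff n

/-- The multiplication `×̃` on `1 + A[[t]]⁺` defined coefficientwise by the
universal polynomials `Pₙ` evaluated at the coefficients of `f` and `g`. -/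
noncomputable def wmul {A : Type} [CommRing A]
    (P : ∀ n : ℕ, MvPolynomial (Fin n ⊕ Fin n) ℤ) (f g : PowerSeries A) :
    PowerSeries A :=
  PowerSeries.mk fun n =>
    MvPolynomial.eval₂ (Int.castRingHom A)
      (Sum.elim (fun i : Fin n => PowerSeries.coeff ((i : ℕ) + 1) f)
        fun j : Fin n => PowerSeries.coeff ((j : ℕ) + 1) g)
      (P n)

/-! The splitting principle. For finitely many series with constant term `1` and any `n`,
there is an injective extension of the coefficient ring over which each series agrees
up to degree `n` with a product `∏ᵢ (1 + ξᵢ t)`: the reversed truncation is a monic polynomial,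
which splits after an injective (free) extension. For such series the defining property of
`Pₙ` says that `f ×̃ g` agrees up to degree `n` with `∏ᵢⱼ (1 + ξᵢ ζⱼ t)`, so each ring axiom
reduces to reindexing a product of linear factors: `ι × κ ≃ κ × ι`, `(ι × κ) × λ ≃ ι × (κ × λ)`,
`(ι ⊕ κ) × λ ≃ ι × λ ⊕ κ × λ`, and `1 + t = ∏ᵢ (1 + ξᵢ t)` for `ξ = (1, 0, …, 0)`. -/

open PowerSeries

noncomputable def esymmGen {B ι : Type} [CommRing B] [Fintype ι] (ξ : ι → B) : B⟦X⟧ :=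
  ∏ i, (1 + C (ξ i) * X)

section esymmGen

variable {B B' ι κ : Type} [CommRing B] [CommRing B'] [Fintype ι] [Fintype κ]

theorem coeff_esymmGen (ξ : ι → B) (k : ℕ) :
    coeff k (esymmGen ξ) = ∑ t ∈ Finset.powersetCard k Finset.univ, ∏ i ∈ t, ξ i := by
  classical
  simp only [esymmGen, Finset.prod_one_add, Finset.prod_mul_distrib, ← map_prod,
    Finset.prod_const, map_sum, coeff_C_mul_X_pow, Finset.powersetCard_eq_filter,
    Finset.sum_filter, eq_comm]

theorem esymmGen_comp_equiv (ξ : ι → B) (e : κ ≃ ι) : esymmGen (ξ ∘ e) = esymmGen ξ :=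
  e.prod_comp fun i => 1 + C (ξ i) * X

theorem esymmGen_sumElim (ξ : ι → B) (ζ : κ → B) :
    esymmGen (Sum.elim ξ ζ) = esymmGen ξ * esymmGen ζ :=
  Fintype.prod_sum_type _

theorem map_esymmGen (φ : B →+* B') (ξ : ι → B) : map φ (esymmGen ξ) = esymmGen (φ ∘ ξ) := by
  simp [esymmGen, map_prod]

theorem esymmF_eq_coeff_esymmGen {q : ℕ} (k : ℕ) (ξ : Fin q → B) :
    esymmF k ξ = coeff k (esymmGen ξ) :=
  (coeff_esymmGen ξ k).symm

theorem coeff_esymmGen_eq_polynomial_coeff (ξ : ι → B) (k : ℕ) :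
    coeff k (esymmGen ξ) = (∏ i, (1 + Polynomial.C (ξ i) * Polynomial.X)).coeff k := by
  rw [← Polynomial.coeff_coe, ← Polynomial.coeToPowerSeries.ringHom_apply, map_prod]
  simp [esymmGen]

end esymmGen

section trunc

variable {B B' : Type} [CommRing B] [CommRing B'] {n : ℕ} {f f' g g' : B⟦X⟧}

theorem coeff_eq_of_trunc_eq (h : trunc n f = trunc n g) {k : ℕ} (hk : k < n) :
    coeff k f = coeff k g := by
  simpa [coeff_trunc, hk] using congrArg (Polynomial.coeff · k) h

theorem trunc_mul_congr (hf : trunc n f = trunc n f') (hg : trunc n g = trunc n g') :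
    trunc n (f * g) = trunc n (f' * g') := by
  rw [← trunc_trunc_mul_trunc, hf, hg, trunc_trunc_mul_trunc]

theorem trunc_map_congr (φ : B →+* B') (h : trunc n f = trunc n g) :
    trunc n (map φ f) = trunc n (map φ g) := by
  rw [trunc_map, trunc_map, h]

end trunc

section wmul

variable {P : ∀ n : ℕ, MvPolynomial (Fin n ⊕ Fin n) ℤ}

theorem map_wmul {A B : Type} [CommRing A] [CommRing B] (φ : A →+* B) (f g : A⟦X⟧) :
    map φ (wmul P f g) = wmul P (map φ f) (map φ g) := by
  ext n
  simp only [wmul, coeff_map, coeff_mk, MvPolynomial.eval₂_comp_left]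
  congr 1
  · exact RingHom.ext_int _ _
  · funext x
    cases x <;> simp

variable (hP : IsWittMulFamily P)
include hP

theorem constantCoeff_wmul {A : Type} [CommRing A] (f g : A⟦X⟧) :
    constantCoeff (wmul P f g) = 1 := by
  have h := hP A 0 0 0 le_rfl le_rfl Fin.elim0 Fin.elim0
  rw [← coeff_zero_eq_constantCoeff_apply, wmul, coeff_mk]
  convert h using 2
  · exact Subsingleton.elim _ _
  · simp

theorem trunc_wmul_esymmGen {B ι κ : Type} [CommRing B] [Fintype ι] [Fintype κ]
    {f g : B⟦X⟧} {ξ : ι → B} {ζ : κ → B} {N : ℕ}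
    (hf : trunc (N + 1) f = trunc (N + 1) (esymmGen ξ))
    (hg : trunc (N + 1) g = trunc (N + 1) (esymmGen ζ))
    (hι : N ≤ Fintype.card ι) (hκ : N ≤ Fintype.card κ) :
    trunc (N + 1) (wmul P f g) = trunc (N + 1) (esymmGen fun x : ι × κ => ξ x.1 * ζ x.2) := by
  ext k
  simp only [coeff_trunc]
  split_ifs with hk
  · have hkN : k ≤ N := Nat.le_of_lt_succ hk
    let e := Fintype.equivFin ι
    let e' := Fintype.equivFin κ
    have hprod := hP B k _ _ (hkN.trans hι) (hkN.trans hκ) (ξ ∘ e.symm) (ζ ∘ e'.symm)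
    rw [← Fintype.prod_prod_type' fun i j =>
        1 + Polynomial.C ((ξ ∘ e.symm) i * (ζ ∘ e'.symm) j) * Polynomial.X,
      ← coeff_esymmGen_eq_polynomial_coeff] at hprod
    rw [wmul, coeff_mk, ← esymmGen_comp_equiv _ (e.prodCongr e').symm]
    refine Eq.trans ?_ hprod
    congr 1
    funext x
    rcases x with i | j
    · rw [Sum.elim_inl, Sum.elim_inl, esymmF_eq_coeff_esymmGen, esymmGen_comp_equiv]
      exact coeff_eq_of_trunc_eq hf (by omega)
    · rw [Sum.elim_inr, Sum.elim_inr, esymmF_eq_coeff_esymmGen, esymmGen_comp_equiv]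
      exact coeff_eq_of_trunc_eq hg (by omega)
  · rfl

end wmul

open Polynomial in
theorem Polynomial.Monic.exists_injective_map_eq_prod_X_add_C {R : Type} [CommRing R]
    [Nontrivial R] {p : R[X]} (hp : p.Monic) {n : ℕ} (hn : p.natDegree = n) :
    ∃ (S : Type) (_ : CommRing S) (φ : R →+* S) (μ : Fin n → S),
      Function.Injective φ ∧ p.map φ = ∏ i, (X + C (μ i)) := by
  obtain ⟨S, _, _, _, _, _, hS⟩ := hp.exists_splits_map
  obtain ⟨m, hm⟩ := splits_iff_exists_multiset'.1 hS
  rw [(hp.map _).leadingCoeff, C_1, one_mul] at hm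
  have hlen : m.toList.length = n := by
    rw [Multiset.length_toList, ← hn, ← hp.natDegree_map (algebraMap R S), hm,
      natDegree_multiset_prod_of_monic _ (by simp [monic_X_add_C])]
    simp
  refine ⟨S, inferInstance, algebraMap R S, fun i => m.toList[(i : ℕ)]'(by omega),
    FaithfulSMul.algebraMap_injective R S, ?_⟩
  rw [hm, ← Fin.prod_congr' _ hlen]
  simp only [Fin.val_cast, Fin.prod_univ_fun_getElem m.toList fun x => X + C x]
  rw [← Multiset.prod_coe, ← Multiset.map_coe, Multiset.coe_toList]

theorem exists_injective_trunc_map_eq_esymmGen {A : Type} [CommRing A] (f : A⟦X⟧)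
    (hf : constantCoeff f = 1) (n : ℕ) :
    ∃ (B : Type) (_ : CommRing B) (φ : A →+* B) (ξ : Fin n → B),
      Function.Injective φ ∧ trunc (n + 1) (map φ f) = trunc (n + 1) (esymmGen ξ) := by
  rcases subsingleton_or_nontrivial A with hA | hA
  · exact ⟨A, inferInstance, RingHom.id A, 0, Function.injective_id, Subsingleton.elim _ _⟩
  set p := (trunc (n + 1) f).reflect n
  have hcoeff : ∀ k ≤ n, p.coeff (n - k) = coeff k f := by
    intro k hk
    rw [Polynomial.coeff_reflect, Polynomial.revAt_le (by omega), coeff_trunc,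
      if_pos (by omega), Nat.sub_sub_self hk]
  have hp1 : p.coeff n = 1 := by simpa [hf] using hcoeff 0 n.zero_le
  have hdeg : p.natDegree ≤ n := Polynomial.natDegree_reflect_le.trans
    (max_le le_rfl (Nat.le_of_lt_succ (natDegree_trunc_lt f n)))
  have hmonic : p.Monic := Polynomial.monic_of_natDegree_le_of_coeff_eq_one n hdeg hp1
  obtain ⟨B, _, φ, μ, hφ, hsplit⟩ := hmonic.exists_injective_map_eq_prod_X_add_C
    (hdeg.antisymm (Polynomial.le_natDegree_of_ne_zero (by simp [hp1])))
  refine ⟨B, inferInstance, φ, μ, hφ, ?_⟩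
  ext k
  simp only [coeff_trunc]
  split_ifs with hk
  · have hkn : k ≤ n := Nat.le_of_lt_succ hk
    rw [coeff_map, ← hcoeff k hkn, ← Polynomial.coeff_map, hsplit,
      Finset.prod_X_add_C_coeff _ _ (by simp), coeff_esymmGen]
    simp [Nat.sub_sub_self hkn]
  · rfl

theorem exists_injective_forall_trunc_map_eq_esymmGen {A : Type} [CommRing A] (l : List A⟦X⟧)
    (hl : ∀ f ∈ l, constantCoeff f = 1) (n : ℕ) :
    ∃ (B : Type) (_ : CommRing B) (φ : A →+* B) (ξ : A⟦X⟧ → Fin n → B), Function.Injective φ ∧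
      ∀ f ∈ l, trunc (n + 1) (map φ f) = trunc (n + 1) (esymmGen (ξ f)) := by
  induction l with
  | nil => exact ⟨A, inferInstance, RingHom.id A, 0, Function.injective_id, by simp⟩
  | cons f l ih =>
    classical
    obtain ⟨B, _, φ, ξ, hφ, hξ⟩ := ih (fun g hg => hl g (List.mem_cons_of_mem f hg))
    have hfφ : constantCoeff (map φ f) = 1 := by
      rw [← coeff_zero_eq_constantCoeff_apply, coeff_map, coeff_zero_eq_constantCoeff_apply,
        hl f List.mem_cons_self, map_one]
    obtain ⟨B', _, ψ, μ, hψ, hμ⟩ := exists_injective_trunc_map_eq_esymmGen (map φ f) hfφ n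
    refine ⟨B', inferInstance, ψ.comp φ, Function.update (fun g => ψ ∘ ξ g) f μ,
      hψ.comp hφ, fun g hg => ?_⟩
    rw [map_comp, RingHom.comp_apply]
    by_cases hgf : g = f
    · subst hgf
      rw [Function.update_self, hμ]
    · rw [Function.update_of_ne hgf, ← map_esymmGen]
      exact trunc_map_congr ψ (hξ g ((List.mem_cons.1 hg).resolve_left hgf))

theorem eq_of_forall_trunc_map_eq {A : Type} [CommRing A] (l : List A⟦X⟧)
    (hl : ∀ f ∈ l, constantCoeff f = 1) {F G : A⟦X⟧}
    (H : ∀ (B : Type) [CommRing B] (φ : A →+* B) (n : ℕ) (ξ : A⟦X⟧ → Fin n → B),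
      (∀ f ∈ l, trunc (n + 1) (map φ f) = trunc (n + 1) (esymmGen (ξ f))) →
      trunc (n + 1) (map φ F) = trunc (n + 1) (map φ G)) :
    F = G := by
  ext n
  obtain ⟨B, _, φ, ξ, hφ, hξ⟩ := exists_injective_forall_trunc_map_eq_esymmGen l hl n
  apply hφ
  rw [← coeff_map, ← coeff_map]
  exact coeff_eq_of_trunc_eq (H B φ n ξ hξ) n.lt_succ_self

section WittRing

variable {A : Type} [CommRing A] {P : ∀ n : ℕ, MvPolynomial (Fin n ⊕ Fin n) ℤ}
  (hP : IsWittMulFamily P) {f g h : A⟦X⟧}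
include hP

theorem wmul_comm (hf : constantCoeff f = 1) (hg : constantCoeff g = 1) :
    wmul P f g = wmul P g f := by
  refine eq_of_forall_trunc_map_eq [f, g] (by simp [hf, hg]) fun B _ φ n ξ hξ => ?_
  rw [map_wmul, map_wmul,
    trunc_wmul_esymmGen hP (hξ f (by simp)) (hξ g (by simp)) (by simp) (by simp),
    trunc_wmul_esymmGen hP (hξ g (by simp)) (hξ f (by simp)) (by simp) (by simp),
    ← esymmGen_comp_equiv _ (Equiv.prodComm _ _)]
  simp only [Function.comp_def, Equiv.prodComm_apply, Prod.fst_swap, Prod.snd_swap, mul_comm]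

theorem wmul_assoc (hf : constantCoeff f = 1) (hg : constantCoeff g = 1)
    (hh : constantCoeff h = 1) :
    wmul P (wmul P f g) h = wmul P f (wmul P g h) := by
  refine eq_of_forall_trunc_map_eq [f, g, h] (by simp [hf, hg, hh]) fun B _ φ n ξ hξ => ?_
  have hf' := hξ f (by simp)
  have hg' := hξ g (by simp)
  have hh' := hξ h (by simp)
  rw [map_wmul, map_wmul, map_wmul, map_wmul,
    trunc_wmul_esymmGen hP (trunc_wmul_esymmGen hP hf' hg' (by simp) (by simp)) hh'
      (by simp [Nat.le_mul_self]) (by simp),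
    trunc_wmul_esymmGen hP hf' (trunc_wmul_esymmGen hP hg' hh' (by simp) (by simp))
      (by simp) (by simp [Nat.le_mul_self]),
    ← esymmGen_comp_equiv _ (Equiv.prodAssoc _ _ _).symm]
  simp only [Function.comp_def, Equiv.prodAssoc_symm_apply, mul_assoc]

theorem mul_wmul (hf : constantCoeff f = 1) (hg : constantCoeff g = 1)
    (hh : constantCoeff h = 1) :
    wmul P (f * g) h = wmul P f h * wmul P g h := by
  refine eq_of_forall_trunc_map_eq [f, g, h] (by simp [hf, hg, hh]) fun B _ φ n ξ hξ => ?_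
  have hf' := hξ f (by simp)
  have hg' := hξ g (by simp)
  have hh' := hξ h (by simp)
  have hfg : trunc (n + 1) (map φ f * map φ g) =
      trunc (n + 1) (esymmGen (Sum.elim (ξ f) (ξ g))) := by
    rw [esymmGen_sumElim]
    exact trunc_mul_congr hf' hg'
  rw [map_wmul, map_mul, map_mul, map_wmul, map_wmul,
    trunc_wmul_esymmGen hP hfg hh' (by simp) (by simp),
    trunc_mul_congr (trunc_wmul_esymmGen hP hf' hh' (by simp) (by simp))
      (trunc_wmul_esymmGen hP hg' hh' (by simp) (by simp)),
    ← esymmGen_sumElim, ← esymmGen_comp_equiv _ (Equiv.sumProdDistrib _ _ _)]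
  congr 2
  funext x
  rcases x with ⟨i | j, k⟩ <;> rfl

theorem one_add_X_wmul (hf : constantCoeff f = 1) : wmul P (1 + X) f = f := by
  refine eq_of_forall_trunc_map_eq [f] (by simp [hf]) fun B _ φ n ξ hξ => ?_
  have hone : trunc (n + 1) (1 + X : B⟦X⟧) =
      trunc (n + 1) (esymmGen (Pi.single (0 : Fin (n + 1)) 1)) := by
    simp [esymmGen, Fin.prod_univ_succ]
  rw [map_wmul, map_add, map_one, map_X,
    trunc_wmul_esymmGen hP hone (hξ f (by simp)) (by simp) (by simp), hξ f (by simp)]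
  simp [esymmGen, Fintype.prod_prod_type, Fin.prod_univ_succ]

end WittRing

/-- on `1 + A[[t]]⁺` the operations "addition = multiplication of
power series" and "multiplication = `wmul P`" (with `Pₙ` the universal
polynomials) form a commutative ring with zero element `1` and multiplicative
identity `1 + t`: addition is the multiplicative group of such series,
`wmul` is commutative, associative, distributes over addition, and `1 + t`
is a multiplicative identity. -/
theorem wittRing_structure {A : Type} [CommRing A]
    (P : ∀ n : ℕ, MvPolynomial (Fin n ⊕ Fin n) ℤ) (hP : IsWittMulFamily P) :
    ∀ f g h : PowerSeries A,
      PowerSeries.constantCoeff f = 1 →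
      PowerSeries.constantCoeff g = 1 →
      PowerSeries.constantCoeff h = 1 →
      PowerSeries.constantCoeff (f * g) = 1 ∧
      PowerSeries.constantCoeff (wmul P f g) = 1 ∧
      wmul P f g = wmul P g f ∧
      wmul P (wmul P f g) h = wmul P f (wmul P g h) ∧
      wmul P (f * g) h = wmul P f h * wmul P g h ∧
      wmul P (1 + PowerSeries.X) f = f ∧
      ∃ finv : PowerSeries A, PowerSeries.constantCoeff finv = 1 ∧ f * finv = 1 := by
  intro f g h hf hg hh
  exact ⟨by rw [map_mul, hf, hg, one_mul], constantCoeff_wmul hP f g, wmul_comm hP hf hg,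
    wmul_assoc hP hf hg hh, mul_wmul hP hf hg hh, one_add_X_wmul hP hf,
    invOfUnit f 1, by simp [constantCoeff_invOfUnit], mul_invOfUnit f 1 (by simp [hf])⟩
end

section
/- Let R be a pre-λ-ring that is torsion free as an additive group (nr ≠ 0 for all r ≠ 0 and n ≥ 1). Define Adams operations Ψⁿ : R → R by (d/dt) log λ_t(a) = Σ_{n≥0} (-1)ⁿ Ψ^{n+1}(a) tⁿ. If Ψⁿ(1) = 1, Ψⁿ(ab) = Ψⁿ(a)Ψⁿ(b), and Ψⁿ(Ψᵐ(a)) = Ψ^{nm}(a) for all n, m ≥ 1 and a, b ∈ R, then the pre-λ-ring structure on R is a λ-ring structure, i.e. λⁿ(xy) = Pₙ(λ¹(x),…,λⁿ(x); λ¹(y),…,λⁿ(y)) and λᵐ(λⁿ(x)) = P_{m,n}(λ¹(x),…,λ^{mn}(x)) hold for all x, y ∈ R. -/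
/-- A pre-λ-ring structure on a commutative ring `R`. -/
def IsPreLambda {R : Type} [CommRing R] (l : ℕ → R → R) : Prop :=
  (∀ x : R, l 0 x = 1) ∧ (∀ x : R, l 1 x = x) ∧
  (∀ x y : R, ∀ n : ℕ, l n (x + y) = ∑ j ∈ Finset.range (n + 1), l j x * l (n - j) y)

/-- The universal polynomials `P_{n,m}` governing exterior powers:
`P_{n,m}(s)` is the coefficient of `tⁿ` in `∏_{i₁<…<i_m}(1 + ξ_{i₁}⋯ξ_{i_m}t)`. -/
def IsWittExtFamily (Q : ∀ n m : ℕ, MvPolynomial (Fin (n * m)) ℤ) : Prop :=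
  ∀ (S : Type) [CommRing S], ∀ (n m q : ℕ), n * m ≤ q → ∀ ξ : Fin q → S,
    MvPolynomial.eval₂ (Int.castRingHom S)
        (fun i : Fin (n * m) => esymmF ((i : ℕ) + 1) ξ) (Q n m)
      = (∏ s ∈ Finset.powersetCard m (Finset.univ : Finset (Fin q)),
          (1 + Polynomial.C (∏ i ∈ s, ξ i) * Polynomial.X)).coeff n

/-- The Newton recursion characterizing the Adams operations `Ψ` associated to
the λ-operations `l`, equivalent to
`(d/dt) log λ_t(a) = ∑ (-1)ⁿ Ψ^{n+1}(a) tⁿ`. -/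
def NewtonRec {R : Type} [CommRing R] (l Ψ : ℕ → R → R) : Prop :=
  ∀ (a : R) (k : ℕ), 1 ≤ k →
    (∑ i ∈ Finset.range k, (-1 : R) ^ i * l i a * Ψ (k - i) a)
      = (-1 : R) ^ (k + 1) * (k : R) * l k a

/-- The two λ-ring identities (1.23) and (1.34):
`λⁿ(xy) = Pₙ(λ¹x,…,λⁿx; λ¹y,…,λⁿy)` and `λᵐ(λⁿx) = P_{m,n}(λ¹x,…,λ^{mn}x)`. -/
def LambdaIdent {R : Type} [CommRing R] (l : ℕ → R → R)
    (P : ∀ n : ℕ, MvPolynomial (Fin n ⊕ Fin n) ℤ)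
    (Q : ∀ n m : ℕ, MvPolynomial (Fin (n * m)) ℤ) : Prop :=
  (∀ x y : R, ∀ n : ℕ,
      l n (x * y) = MvPolynomial.eval₂ (Int.castRingHom R)
        (Sum.elim (fun i : Fin n => l ((i : ℕ) + 1) x)
          fun j : Fin n => l ((j : ℕ) + 1) y)
        (P n)) ∧
  (∀ x : R, ∀ m n : ℕ,
      l m (l n x) = MvPolynomial.eval₂ (Int.castRingHom R)
        (fun i : Fin (m * n) => l ((i : ℕ) + 1) x) (Q m n))

open Finset

section Newton

variable {S T : Type*} [CommRing S] [CommRing T]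

def NewtonRelAt (c ψ : ℕ → S) (k : ℕ) : Prop :=
  ∑ i ∈ range k, (-1 : S) ^ i * c i * ψ (k - i) = (-1) ^ (k + 1) * (k : S) * c k

def IsNewtonDual (c ψ : ℕ → S) : Prop :=
  ∀ k, 1 ≤ k → NewtonRelAt c ψ k

theorem newtonRelAt_iff_of_map (f : S →+* T) {c ψ : ℕ → S} {c' ψ' : ℕ → T} {k : ℕ}
    (hc : ∀ i ≤ k, f (c i) = c' i) (hψ : ∀ i, 1 ≤ i → i ≤ k → f (ψ i) = ψ' i) :
    NewtonRelAt c' ψ' k ↔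
      f (∑ i ∈ range k, (-1 : S) ^ i * c i * ψ (k - i)) = f ((-1) ^ (k + 1) * (k : S) * c k) := by
  have hsum : ∑ i ∈ range k, (-1 : T) ^ i * f (c i) * f (ψ (k - i))
      = ∑ i ∈ range k, (-1) ^ i * c' i * ψ' (k - i) := sum_congr rfl fun i hi => by
    rw [hc i (mem_range.1 hi).le, hψ (k - i) (by grind) (by omega)]
  simp only [NewtonRelAt, map_sum, map_mul, map_pow, map_neg, map_one, map_natCast, hc k le_rfl,
    hsum]

theorem NewtonRelAt.map (f : S →+* T) {c ψ : ℕ → S} {c' ψ' : ℕ → T} {k : ℕ}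
    (h : NewtonRelAt c ψ k) (hc : ∀ i ≤ k, f (c i) = c' i)
    (hψ : ∀ i, 1 ≤ i → i ≤ k → f (ψ i) = ψ' i) : NewtonRelAt c' ψ' k :=
  (newtonRelAt_iff_of_map f hc hψ).2 (congrArg f h)

theorem NewtonRelAt.of_map {f : S →+* T} (hf : Function.Injective f) {c ψ : ℕ → S}
    {c' ψ' : ℕ → T} {k : ℕ} (h : NewtonRelAt c' ψ' k) (hc : ∀ i ≤ k, f (c i) = c' i)
    (hψ : ∀ i, 1 ≤ i → i ≤ k → f (ψ i) = ψ' i) : NewtonRelAt c ψ k :=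
  hf ((newtonRelAt_iff_of_map f hc hψ).1 h)

theorem IsNewtonDual.map (f : S →+* T) {c ψ : ℕ → S} (h : IsNewtonDual c ψ) :
    IsNewtonDual (fun i => f (c i)) (fun i => f (ψ i)) :=
  fun k hk => (h k hk).map f (fun _ _ => rfl) fun _ _ _ => rfl

theorem IsNewtonDual.congr {c ψ ψ' : ℕ → S} (h : IsNewtonDual c ψ)
    (hψ : ∀ k, 1 ≤ k → ψ k = ψ' k) : IsNewtonDual c ψ' :=
  fun k hk => (h k hk).map (RingHom.id S) (fun _ _ => rfl) fun i hi _ => hψ i hi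

/-- The Newton relations solve for `ψ_k` as an integer polynomial in `c₁, …, c_k`. -/
theorem IsNewtonDual.map_apply_eq {c ψ : ℕ → S} {c' ψ' : ℕ → T} (h : IsNewtonDual c ψ)
    (h' : IsNewtonDual c' ψ') (f : S →+* T) (h0 : c 0 = 1) {K : ℕ}
    (hc : ∀ i ≤ K, f (c i) = c' i) {k : ℕ} (hk : 1 ≤ k) (hkK : k ≤ K) : f (ψ k) = ψ' k := by
  induction k using Nat.strong_induction_on with
  | _ k ih =>
    obtain ⟨k, rfl⟩ := Nat.exists_eq_add_of_le' hk
    have e := congrArg f (h (k + 1) hk)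
    have e' := h' (k + 1) hk
    rw [sum_range_succ'] at e
    rw [NewtonRelAt, sum_range_succ', ← hc 0 (Nat.zero_le _), h0, map_one] at e'
    simp only [map_add, map_sum, map_mul, map_pow, map_neg, map_one, map_natCast, h0,
      hc (k + 1) hkK] at e
    rw [sum_congr rfl fun i hi => by
      have := mem_range.1 hi
      rw [hc (i + 1) (by omega), ih (k + 1 - (i + 1)) (by omega) (by omega) (by omega)]] at e
    simpa using e.trans e'.symm

theorem IsNewtonDual.unique_right {c ψ ψ' : ℕ → S} (h : IsNewtonDual c ψ)
    (h' : IsNewtonDual c ψ') (h0 : c 0 = 1) {k : ℕ} (hk : 1 ≤ k) : ψ k = ψ' k :=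
  h.map_apply_eq h' (RingHom.id S) h0 (fun _ _ => rfl) hk le_rfl

theorem IsNewtonDual.unique_left [IsAddTorsionFree S] {c c' ψ : ℕ → S} (h : IsNewtonDual c ψ)
    (h' : IsNewtonDual c' ψ) (h0 : c 0 = c' 0) : c = c' := by
  funext n
  induction n using Nat.strong_induction_on with
  | _ n ih =>
    rcases Nat.eq_zero_or_pos n with rfl | hn
    · exact h0
    have e := h n hn
    rw [NewtonRelAt, sum_congr rfl fun i hi => by rw [ih i (mem_range.1 hi)], h' n hn,
      mul_assoc, mul_assoc] at e
    have hsmul : n • c n = n • c' n := by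
      simpa only [nsmul_eq_mul] using ((isUnit_neg_one.pow (n + 1)).mul_right_inj).1 e.symm
    exact IsAddTorsionFree.nsmul_right_injective hn.ne' hsmul

section PowerSeries
open PowerSeries

theorem newtonRelAt_succ_iff (c ψ : ℕ → S) (n : ℕ) :
    NewtonRelAt c ψ (n + 1) ↔
      coeff n (rescale (-1) (mk c) * mk (fun n => ψ (n + 1)))
        = coeff n (-d⁄dX S (rescale (-1) (mk c))) := by
  rw [coeff_mul, Nat.sum_antidiagonal_eq_sum_range_succ_mk, map_neg, coeff_derivative]
  simp only [coeff_rescale, coeff_mk]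
  rw [NewtonRelAt, sum_congr rfl fun i hi => by rw [Nat.sub_add_comm (by grind)]]
  constructor <;> intro h <;> push_cast at h ⊢ <;> linear_combination h

theorem isNewtonDual_iff (c ψ : ℕ → S) :
    IsNewtonDual c ψ ↔
      rescale (-1) (mk c) * mk (fun n => ψ (n + 1)) = -d⁄dX S (rescale (-1) (mk c)) := by
  rw [PowerSeries.ext_iff]
  refine ⟨fun h n => (newtonRelAt_succ_iff c ψ n).1 (h (n + 1) n.succ_pos), fun h k hk => ?_⟩
  obtain ⟨n, rfl⟩ := Nat.exists_eq_add_of_le' hk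
  exact (newtonRelAt_succ_iff c ψ n).2 (h n)

theorem IsNewtonDual.convolution {a b α β : ℕ → S} (ha : IsNewtonDual a α)
    (hb : IsNewtonDual b β) :
    IsNewtonDual (fun n => ∑ p ∈ antidiagonal n, a p.1 * b p.2) (α + β) := by
  rw [isNewtonDual_iff] at ha hb ⊢
  have hconv : mk (fun n => ∑ p ∈ antidiagonal n, a p.1 * b p.2) = mk a * mk b := by
    ext n; simp [coeff_mul]
  have hsum : mk (fun n => (α + β) (n + 1))
      = mk (fun n => α (n + 1)) + mk (fun n => β (n + 1)) := by
    ext n; simp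
  rw [hconv, hsum, map_mul, Derivation.leibniz, smul_eq_mul, smul_eq_mul]
  linear_combination rescale (-1) (mk b) * ha + rescale (-1) (mk a) * hb

/-- The solution of `isNewtonDual_iff` for `ψ`; its value at `0` is meaningless. -/
noncomputable def newtonDual (c : ℕ → S) (n : ℕ) : S :=
  coeff (n - 1) (-d⁄dX S (rescale (-1) (mk c)) * invOfUnit (rescale (-1) (mk c)) 1)

theorem isNewtonDual_newtonDual {c : ℕ → S} (h0 : c 0 = 1) :
    IsNewtonDual c (newtonDual c) := by
  rw [isNewtonDual_iff]
  have hinv : rescale (-1) (mk c) * invOfUnit (rescale (-1) (mk c)) 1 = 1 :=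
    mul_invOfUnit _ _ (by simp [← coeff_zero_eq_constantCoeff_apply, h0])
  have hmk : mk (fun n => newtonDual c (n + 1))
      = -d⁄dX S (rescale (-1) (mk c)) * invOfUnit (rescale (-1) (mk c)) 1 := by
    ext n; simp [newtonDual]
  rw [hmk, mul_left_comm, hinv, mul_one]

end PowerSeries

section Polynomial
open Polynomial

theorem isNewtonDual_coeff_one_add_C_mul_X (r : S) :
    IsNewtonDual (1 + C r * X).coeff (fun k => r ^ k) := by
  rintro (_ | _ | k) hk
  · omega
  · simp [NewtonRelAt, coeff_one]
  · rw [NewtonRelAt, sum_range_succ', sum_range_succ', sum_eq_zero fun i _ => by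
      simp [coeff_one]]
    simp [coeff_one]
    ring

theorem coeff_prod_one_add_C_mul_X {ι : Type*} (A : Finset ι) (x : ι → S) (k : ℕ) :
    (∏ i ∈ A, (1 + C (x i) * X)).coeff k = ∑ t ∈ A.powersetCard k, ∏ i ∈ t, x i := by
  classical
  simp only [prod_one_add, prod_mul_distrib, prod_const, ← map_prod, finsetSum_coeff,
    coeff_C_mul_X_pow, powersetCard_eq_filter, sum_filter]
  exact sum_congr rfl fun t _ => by split_ifs <;> simp_all [eq_comm]

theorem isNewtonDual_coeff_prod {ι : Type*} (A : Finset ι) (x : ι → S) :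
    IsNewtonDual (∏ i ∈ A, (1 + C (x i) * X)).coeff (fun k => ∑ i ∈ A, x i ^ k) := by
  classical
  induction A using Finset.induction_on with
  | empty => intro k hk; simp [NewtonRelAt, coeff_one, Nat.pos_iff_ne_zero.1 hk]
  | insert a A ha ih =>
    convert (isNewtonDual_coeff_one_add_C_mul_X (x a)).convolution ih using 1
    · ext n; rw [prod_insert ha, coeff_mul]
    · ext k; simp [sum_insert ha]

end Polynomial

end Newton

section Universal
open MvPolynomial

variable {A B : Type} [CommRing A] [CommRing B]

theorem esymmF_zero {q : ℕ} (ξ : Fin q → A) : esymmF 0 ξ = 1 := by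
  simp [esymmF]

theorem isNewtonDual_esymmF {q : ℕ} (ξ : Fin q → A) :
    IsNewtonDual (esymmF · ξ) (fun k => ∑ i, ξ i ^ k) := by
  have h : (esymmF · ξ) = (∏ i, (1 + Polynomial.C (ξ i) * Polynomial.X)).coeff :=
    funext fun k => (coeff_prod_one_add_C_mul_X _ _ k).symm
  exact h ▸ isNewtonDual_coeff_prod univ ξ

theorem algebraicIndependent_esymm (R : Type*) [CommRing R] (K : ℕ) :
    AlgebraicIndependent R (fun i : Fin K => esymm (Fin K) R (i + 1)) := by
  intro p q hpq
  refine esymmAlgHom_injective R (σ := Fin K) (n := K) (by simp) (Subtype.ext ?_)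
  simpa [esymmAlgHom_apply] using hpq

def truncSeq {K : ℕ} (g : Fin K → A) (j : ℕ) : A :=
  if j = 0 then 1 else if h : j - 1 < K then g ⟨j - 1, h⟩ else 0

theorem truncSeq_zero {K : ℕ} (g : Fin K → A) : truncSeq g 0 = 1 :=
  if_pos rfl

theorem map_truncSeq (f : A →+* B) {K : ℕ} {g : Fin K → A} {c : ℕ → B} (h0 : c 0 = 1)
    (hg : ∀ i : Fin K, f (g i) = c (i + 1)) {j : ℕ} (hj : j ≤ K) : f (truncSeq g j) = c j := by
  unfold truncSeq
  split_ifs with hj0 hjK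
  · rw [map_one, hj0, h0]
  · rw [hg, Fin.val_mk, Nat.sub_add_cancel (Nat.one_le_iff_ne_zero.2 hj0)]
  · omega

theorem map_newtonDual_truncSeq (f : A →+* B) {K : ℕ} {g : Fin K → A} {c ψ : ℕ → B}
    (h : IsNewtonDual c ψ) (h0 : c 0 = 1) (hg : ∀ i : Fin K, f (g i) = c (i + 1)) {t : ℕ}
    (ht : 1 ≤ t) (htK : t ≤ K) : f (newtonDual (truncSeq g) t) = ψ t :=
  (isNewtonDual_newtonDual (truncSeq_zero g)).map_apply_eq h f (truncSeq_zero g)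
    (fun _ => map_truncSeq f h0 hg) ht htK

def mulSeq (P : ∀ n : ℕ, MvPolynomial (Fin n ⊕ Fin n) ℤ) (a b : ℕ → A) (n : ℕ) : A :=
  eval₂ (Int.castRingHom A) (Sum.elim (fun i : Fin n => a (i + 1)) fun j : Fin n => b (j + 1))
    (P n)

def compSeq (Q : ∀ n m : ℕ, MvPolynomial (Fin (n * m)) ℤ) (a : ℕ → A) (m n : ℕ) : A :=
  eval₂ (Int.castRingHom A) (fun i : Fin (m * n) => a (i + 1)) (Q m n)

theorem map_mulSeq (f : A →+* B) (P : ∀ n : ℕ, MvPolynomial (Fin n ⊕ Fin n) ℤ) {a b : ℕ → A}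
    {a' b' : ℕ → B} {n : ℕ} (ha : ∀ i, 1 ≤ i → i ≤ n → f (a i) = a' i)
    (hb : ∀ i, 1 ≤ i → i ≤ n → f (b i) = b' i) : f (mulSeq P a b n) = mulSeq P a' b' n := by
  rw [mulSeq, eval₂_comp_left, RingHom.ext_int (f.comp _) (Int.castRingHom B)]
  congr 1
  ext (i | i)
  · exact ha _ (by omega) (by omega)
  · exact hb _ (by omega) (by omega)

theorem map_compSeq (f : A →+* B) (Q : ∀ n m : ℕ, MvPolynomial (Fin (n * m)) ℤ) {a : ℕ → A}
    {a' : ℕ → B} {m n : ℕ} (ha : ∀ i, 1 ≤ i → i ≤ m * n → f (a i) = a' i) :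
    f (compSeq Q a m n) = compSeq Q a' m n := by
  rw [compSeq, eval₂_comp_left, RingHom.ext_int (f.comp _) (Int.castRingHom B)]
  congr 1
  ext i
  exact ha _ (by omega) (by omega)

theorem mulSeq_zero {P : ∀ n : ℕ, MvPolynomial (Fin n ⊕ Fin n) ℤ} (hP : IsWittMulFamily P)
    (a b : ℕ → A) : mulSeq P a b 0 = 1 := by
  have h := hP A 0 0 0 le_rfl le_rfl Fin.elim0 Fin.elim0
  simp only [univ_eq_empty, prod_empty, Polynomial.coeff_one_zero] at h
  rw [mulSeq, ← h]
  congr 1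
  exact Subsingleton.elim _ _

theorem compSeq_zero_left {Q : ∀ n m : ℕ, MvPolynomial (Fin (n * m)) ℤ}
    (hQ : IsWittExtFamily Q) (a : ℕ → A) (n : ℕ) : compSeq Q a 0 n = 1 := by
  have : IsEmpty (Fin (0 * n)) := by rw [zero_mul]; infer_instance
  have h := hQ A 0 n 0 (by simp) Fin.elim0
  rw [coeff_prod_one_add_C_mul_X, powersetCard_zero, sum_singleton, prod_empty] at h
  rw [compSeq, ← h]
  congr 1
  exact Subsingleton.elim _ _

theorem newtonDual_compSeq_zero_right {Q : ∀ n m : ℕ, MvPolynomial (Fin (n * m)) ℤ}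
    (hQ : IsWittExtFamily Q) (a : ℕ → A) {k : ℕ} (hk : 1 ≤ k) :
    newtonDual (fun t => compSeq Q a t 0) k = 1 := by
  have hQ0 : (fun t => compSeq Q a t 0) = (1 + Polynomial.C (1 : A) * Polynomial.X).coeff := by
    ext t
    have : IsEmpty (Fin (t * 0)) := by rw [mul_zero]; infer_instance
    have h := hQ A t 0 0 (by simp) Fin.elim0
    rw [powersetCard_zero, prod_singleton, prod_empty] at h
    rw [compSeq, ← h]
    congr 1
    exact Subsingleton.elim _ _
  have h0 : (1 + Polynomial.C 1 * Polynomial.X : Polynomial A).coeff 0 = 1 := by simp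
  rw [hQ0]
  exact ((isNewtonDual_newtonDual h0).unique_right (isNewtonDual_coeff_one_add_C_mul_X 1) h0
    hk).trans (one_pow k)

theorem newtonRelAt_mulSeq_truncSeq {P : ∀ n : ℕ, MvPolynomial (Fin n ⊕ Fin n) ℤ}
    (hP : IsWittMulFamily P) {K : ℕ} (hK : 1 ≤ K) :
    NewtonRelAt (mulSeq P (truncSeq (X ∘ Sum.inl)) (truncSeq (X ∘ Sum.inr)))
      (newtonDual (truncSeq (X ∘ Sum.inl)) * newtonDual (truncSeq (X ∘ Sum.inr)) :
        ℕ → MvPolynomial (Fin K ⊕ Fin K) ℤ) K := by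
  let ξ : Fin K → MvPolynomial (Fin K) (MvPolynomial (Fin K) ℤ) := X
  let ζ : Fin K → MvPolynomial (Fin K) (MvPolynomial (Fin K) ℤ) := C ∘ X
  let ε := (aeval (R := ℤ) (Sum.elim
    (fun i : Fin K => esymm (Fin K) (MvPolynomial (Fin K) ℤ) (i + 1))
    (algebraMap (MvPolynomial (Fin K) ℤ) _ ∘ fun i : Fin K => esymm (Fin K) ℤ (i + 1)))).toRingHom
  have hε : Function.Injective ε :=
    (algebraicIndependent_esymm ℤ K).sumElim_comp (algebraicIndependent_esymm _ K)
  have hξ : ∀ i : Fin K, ε ((X ∘ Sum.inl) i) = esymmF (i + 1) ξ := fun i => by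
    simp [ε, ξ, esymmF, esymm]
  have hζ : ∀ i : Fin K, ε ((X ∘ Sum.inr) i) = esymmF (i + 1) ζ := fun i => by
    simp [ε, ζ, esymmF, esymm]
  have key := isNewtonDual_coeff_prod (univ : Finset (Fin K × Fin K)) (fun p => ξ p.1 * ζ p.2) K hK
  rw [Fintype.prod_prod_type] at key
  -- `ε` substitutes `eⱼ(ξ)` for `sⱼ` and `eⱼ(ζ)` for `σⱼ`; it is injective, so it suffices to
  -- check the relation after it, where it is Newton's identity for `∏ᵢⱼ (1 + ξᵢζⱼt)`.
  refine key.of_map hε (fun n hn => ?_) fun t ht htK => ?_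
  · rw [map_mulSeq ε P
      (fun i _ hi => map_truncSeq ε (c := (esymmF · ξ)) (esymmF_zero ξ) hξ (by omega))
      fun i _ hi => map_truncSeq ε (c := (esymmF · ζ)) (esymmF_zero ζ) hζ (by omega)]
    exact hP _ n K K hn hn ξ ζ
  · rw [Pi.mul_apply, map_mul,
      map_newtonDual_truncSeq ε (isNewtonDual_esymmF ξ) (esymmF_zero ξ) hξ ht htK,
      map_newtonDual_truncSeq ε (isNewtonDual_esymmF ζ) (esymmF_zero ζ) hζ ht htK,
      sum_mul_sum, Fintype.sum_prod_type]
    simp only [mul_pow]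

theorem newtonRelAt_compSeq_truncSeq {Q : ∀ n m : ℕ, MvPolynomial (Fin (n * m)) ℤ}
    (hQ : IsWittExtFamily Q) {k n : ℕ} (hk : 1 ≤ k) (hn : 1 ≤ n) :
    NewtonRelAt (fun i => newtonDual (fun t => compSeq Q (truncSeq X) t i) k)
      (fun j => newtonDual (truncSeq X) (k * j) : ℕ → MvPolynomial (Fin (k * n)) ℤ) n := by
  let ξ : Fin (k * n) → MvPolynomial (Fin (k * n)) ℤ := X
  let ε := (aeval (R := ℤ) fun i : Fin (k * n) => esymm (Fin (k * n)) ℤ (i + 1)).toRingHom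
  have hε : Function.Injective ε := algebraicIndependent_esymm ℤ (k * n)
  have hξ : ∀ i : Fin (k * n), ε (X i) = esymmF (i + 1) ξ := fun i => by
    simp [ε, ξ, esymmF, esymm]
  have hdual : ∀ i ≤ n, ε (newtonDual (fun t => compSeq Q (truncSeq X) t i) k)
      = ∑ u ∈ powersetCard i univ, (∏ j ∈ u, ξ j) ^ k := fun i hi =>
    (isNewtonDual_newtonDual (compSeq_zero_left hQ _ i)).map_apply_eq
      (isNewtonDual_coeff_prod (powersetCard i univ) fun u => ∏ j ∈ u, ξ j) ε
      (compSeq_zero_left hQ _ i) (fun t ht => by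
        rw [map_compSeq ε Q fun j _ hj =>
          map_truncSeq ε (c := (esymmF · ξ)) (esymmF_zero ξ) hξ (hj.trans (Nat.mul_le_mul ht hi))]
        exact hQ _ t i (k * n) (Nat.mul_le_mul ht hi) ξ) hk le_rfl
  refine (isNewtonDual_coeff_prod univ (fun j => ξ j ^ k) n hn).of_map hε
    (fun i hi => ?_) fun j hj hjn => ?_
  · simp only [hdual i hi, coeff_prod_one_add_C_mul_X, prod_pow]
  · simp only [map_newtonDual_truncSeq ε (isNewtonDual_esymmF ξ) (esymmF_zero ξ) hξ
      (Nat.mul_pos hk hj) (Nat.mul_le_mul_left k hjn), pow_mul]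

theorem IsNewtonDual.mulSeq {P : ∀ n : ℕ, MvPolynomial (Fin n ⊕ Fin n) ℤ}
    (hP : IsWittMulFamily P) {a b α β : ℕ → A} (ha0 : a 0 = 1) (hb0 : b 0 = 1)
    (ha : IsNewtonDual a α) (hb : IsNewtonDual b β) : IsNewtonDual (mulSeq P a b) (α * β) := by
  intro K hK
  let φ := (aeval (R := ℤ)
    (Sum.elim (fun i : Fin K => a (i + 1)) fun i : Fin K => b (i + 1))).toRingHom
  have hφa : ∀ i : Fin K, φ ((X ∘ Sum.inl) i) = a (i + 1) := fun i => by simp [φ]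
  have hφb : ∀ i : Fin K, φ ((X ∘ Sum.inr) i) = b (i + 1) := fun i => by simp [φ]
  refine (newtonRelAt_mulSeq_truncSeq hP hK).map φ (fun n hn => ?_) fun t ht htK => ?_
  · exact map_mulSeq φ P (fun i _ hi => map_truncSeq φ ha0 hφa (by omega))
      fun i _ hi => map_truncSeq φ hb0 hφb (by omega)
  · rw [Pi.mul_apply, map_mul, map_newtonDual_truncSeq φ ha ha0 hφa ht htK,
      map_newtonDual_truncSeq φ hb hb0 hφb ht htK, Pi.mul_apply]

theorem IsNewtonDual.compSeq {Q : ∀ n m : ℕ, MvPolynomial (Fin (n * m)) ℤ}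
    (hQ : IsWittExtFamily Q) {a α : ℕ → A} (ha0 : a 0 = 1) (ha : IsNewtonDual a α) {k : ℕ}
    (hk : 1 ≤ k) :
    IsNewtonDual (fun i => newtonDual (fun t => compSeq Q a t i) k) (fun j => α (k * j)) := by
  intro n hn
  let φ := (aeval (R := ℤ) fun i : Fin (k * n) => a (i + 1)).toRingHom
  have hφ : ∀ i : Fin (k * n), φ (X i) = a (i + 1) := fun i => by simp [φ]
  refine (newtonRelAt_compSeq_truncSeq hQ hk hn).map φ (fun i hi => ?_) fun j hj hjn => ?_
  · exact (isNewtonDual_newtonDual (compSeq_zero_left hQ _ i)).map_apply_eq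
      (isNewtonDual_newtonDual (compSeq_zero_left hQ a i)) φ (compSeq_zero_left hQ _ i)
      (fun t ht => map_compSeq φ Q fun j _ hj =>
        map_truncSeq φ ha0 hφ (hj.trans (Nat.mul_le_mul ht hi))) hk le_rfl
  · exact map_newtonDual_truncSeq φ ha ha0 hφ (Nat.mul_pos hk hj) (Nat.mul_le_mul_left k hjn)

end Universal

section PreLambda

variable {R : Type} [CommRing R] {l Ψ : ℕ → R → R}

theorem NewtonRec.isNewtonDual (hrec : NewtonRec l Ψ) (a : R) :
    IsNewtonDual (l · a) (Ψ · a) :=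
  hrec a

theorem NewtonRec.isNewtonDual_add (hrec : NewtonRec l Ψ) (hl : IsPreLambda l) (a b : R) :
    IsNewtonDual (l · (a + b)) ((Ψ · a) + (Ψ · b)) := by
  convert (hrec.isNewtonDual a).convolution (hrec.isNewtonDual b) using 2 with n
  rw [hl.2.2, Nat.sum_antidiagonal_eq_sum_range_succ_mk]

def NewtonRec.ringHom (hrec : NewtonRec l Ψ) (hl : IsPreLambda l) {k : ℕ} (hk : 1 ≤ k)
    (hone : Ψ k 1 = 1) (hmul : ∀ a b, Ψ k (a * b) = Ψ k a * Ψ k b) : R →+* R :=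
  RingHom.mk' ⟨⟨Ψ k, hone⟩, hmul⟩ fun a b =>
    (hrec.isNewtonDual (a + b)).unique_right (hrec.isNewtonDual_add hl a b) (hl.1 _) hk

theorem NewtonRec.apply_lambda_eq_newtonDual [IsAddTorsionFree R] (hrec : NewtonRec l Ψ)
    (hl : IsPreLambda l) {k : ℕ} (hk : 1 ≤ k) (hone : Ψ k 1 = 1)
    (hmul : ∀ a b, Ψ k (a * b) = Ψ k a * Ψ k b)
    (hcomp : ∀ j, 1 ≤ j → ∀ a, Ψ k (Ψ j a) = Ψ (k * j) a)
    {Q : ∀ n m : ℕ, MvPolynomial (Fin (n * m)) ℤ} (hQ : IsWittExtFamily Q) (x : R) (i : ℕ) :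
    Ψ k (l i x) = newtonDual (fun t => compSeq Q (l · x) t i) k := by
  have hΨl : IsNewtonDual (fun i => Ψ k (l i x)) (fun j => Ψ (k * j) x) :=
    ((hrec.isNewtonDual x).map (hrec.ringHom hl hk hone hmul)).congr fun j hj => hcomp j hj x
  refine congrFun (hΨl.unique_left ((hrec.isNewtonDual x).compSeq hQ (hl.1 x) hk) ?_) i
  rw [hl.1, hone, newtonDual_compSeq_zero_right hQ _ hk]

end PreLambda

/-- torsion-free criterion, Theorem 1.07: if `R` is a torsion-free
pre-λ-ring whose Adams operations satisfy `Ψⁿ(1)=1`, `Ψⁿ(ab)=Ψⁿ(a)Ψⁿ(b)` and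
`Ψⁿ∘Ψᵐ = Ψ^{nm}`, then the pre-λ-structure is a λ-ring structure. -/
theorem torsionFree_preLambda_isLambda {R : Type} [CommRing R]
    (l Ψ : ℕ → R → R) (hl : IsPreLambda l)
    (htf : ∀ (n : ℕ) (r : R), 0 < n → n • r = 0 → r = 0)
    (hrec : NewtonRec l Ψ)
    (hone : ∀ n : ℕ, 1 ≤ n → Ψ n (1 : R) = 1)
    (hmul : ∀ n : ℕ, 1 ≤ n → ∀ a b : R, Ψ n (a * b) = Ψ n a * Ψ n b)
    (hcomp : ∀ n m : ℕ, 1 ≤ n → 1 ≤ m → ∀ a : R, Ψ n (Ψ m a) = Ψ (n * m) a)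
    (P : ∀ n : ℕ, MvPolynomial (Fin n ⊕ Fin n) ℤ) (hP : IsWittMulFamily P)
    (Q : ∀ n m : ℕ, MvPolynomial (Fin (n * m)) ℤ) (hQ : IsWittExtFamily Q) :
    LambdaIdent l P Q := by
  have : IsAddTorsionFree R := ⟨fun n hn a b h => sub_eq_zero.1 <|
    htf n _ (Nat.pos_of_ne_zero hn) (by rw [smul_sub, sub_eq_zero]; exact h)⟩
  refine ⟨fun x y n => ?_, fun x m n => ?_⟩
  · have hprod : IsNewtonDual (l · (x * y)) ((Ψ · x) * (Ψ · y)) :=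
      (hrec.isNewtonDual (x * y)).congr fun k hk => hmul k hk x y
    have hmulSeq := (hrec.isNewtonDual x).mulSeq hP (hl.1 x) (hl.1 y) (hrec.isNewtonDual y)
    exact congrFun (hprod.unique_left hmulSeq (by rw [hl.1, mulSeq_zero hP])) n
  · have hcompSeq : IsNewtonDual (fun t => compSeq Q (l · x) t n) (Ψ · (l n x)) :=
      (isNewtonDual_newtonDual (compSeq_zero_left hQ _ n)).congr fun k hk =>
        (hrec.apply_lambda_eq_newtonDual hl hk (hone k hk) (hmul k hk)
          (fun j hj => hcomp k j hk hj) hQ x n).symm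
    exact congrFun ((hrec.isNewtonDual (l n x)).unique_left hcompSeq
      (by rw [hl.1, compSeq_zero_left hQ])) m
end

section
/- Let S = ⊕_{k≥0} Sᵏ be a graded-commutative ring which vanishes in degrees above some N (e.g. the even-degree real cohomology ring of a closed manifold), with S⁰ containing ℚ. Let M be a free S-module with basis f₀,…,f_{r-1}, and let e_j = Σ_{k=0}^{r-1} (jᵏ + b_{kj}) f_k where each b_{kj} ∈ S has positive degree. Then e₀,…,e_{r-1} is also a basis of M. -/
/-!
In degrees above `N` everything vanishes, so `x ^ (N + 1) = 0` for `x` of positive degree: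
the perturbation matrix `(b k j)` has nilpotent entries. Modulo the nilradical the change-of-basis
matrix is therefore the transposed Vandermonde matrix of the distinct integers `0, …, r - 1`,
whose determinant is a nonzero integer, hence a unit in a `ℚ`-algebra. A determinant which is a
unit modulo the nilradical is a unit, and a matrix with unit determinant carries a basis to a basis.
-/

open Matrix

theorem iSup_pos_le_nilradical {R S : Type*} [CommSemiring R] [CommSemiring S] [Algebra R S]
    (𝒜 : ℕ → Submodule R S) [SetLike.GradedMonoid 𝒜] {N : ℕ} (hvanish : ∀ k, N < k → 𝒜 k = ⊥) :
    ⨆ (i : ℕ) (_ : 0 < i), 𝒜 i ≤ (nilradical S).restrictScalars R := by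
  refine iSup₂_le fun i hi x hx => mem_nilradical.2 ⟨N + 1, ?_⟩
  have hpow : x ^ (N + 1) ∈ 𝒜 ((N + 1) • i) := SetLike.pow_mem_graded _ hx
  rwa [hvanish _ (by rw [smul_eq_mul]; nlinarith)] at hpow

theorem Matrix.isUnit_det_of_isNilpotent_sub {n R : Type*} [Fintype n] [DecidableEq n]
    [CommRing R] {A B : Matrix n n R} (hB : IsUnit B.det)
    (hAB : ∀ i j, IsNilpotent (A i j - B i j)) : IsUnit A.det := by
  let π := Ideal.Quotient.mk (nilradical R)
  have hmap : π.mapMatrix A = π.mapMatrix B := by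
    ext i j
    exact Ideal.Quotient.eq.2 (mem_nilradical.2 (hAB i j))
  have hdet : IsNilpotent (A.det - B.det) := by
    rw [← mem_nilradical, ← Ideal.Quotient.eq, RingHom.map_det, RingHom.map_det, hmap]
  simpa using hdet.isUnit_add_right_of_commute hB (Commute.all _ _)

theorem Matrix.isUnit_det_vandermonde_natCast {S : Type*} [CommRing S] [Algebra ℚ S] {n : ℕ}
    {v : Fin n → ℕ} (hv : Function.Injective v) :
    IsUnit (vandermonde fun i => (v i : S)).det := by
  have hmap : (vandermonde fun i => (v i : S)) =
      (algebraMap ℚ S).mapMatrix (vandermonde fun i => (v i : ℚ)) := by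
    ext i j
    simp
  rw [hmap, ← RingHom.map_det]
  refine (IsUnit.mk0 _ ?_).map _
  exact det_vandermonde_ne_zero_iff.2 (Nat.cast_injective.comp hv)

theorem Module.Basis.exists_basis_of_isUnit_det {ι R M : Type*} [Fintype ι] [DecidableEq ι]
    [CommRing R] [AddCommGroup M] [Module R M] (f : Module.Basis ι R M) {A : Matrix ι ι R}
    (hA : IsUnit A.det) : ∃ e : Module.Basis ι R M, ∀ j, e j = ∑ k, A k j • f k :=
  ⟨f.map (A.toLinearEquiv f hA), fun j => by simp [Matrix.toLin_self]⟩

/-- let `S` be a graded-commutative ring (graded ℚ-algebra)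
vanishing in degrees above `N`, `M` a free `S`-module with basis
`f₀,…,f_{r-1}`, and `e_j = ∑ₖ (jᵏ + b_{kj}) fₖ` with each `b_{kj}` of positive
degree. Then `e₀,…,e_{r-1}` is also a basis of `M`. -/
theorem basis_vandermonde_perturbation {S : Type} [CommRing S] [Algebra ℚ S]
    (𝒜 : ℕ → Submodule ℚ S) [GradedAlgebra 𝒜] (N : ℕ)
    (hvanish : ∀ k : ℕ, N < k → 𝒜 k = ⊥)
    {M : Type} [AddCommGroup M] [Module S M]
    (r : ℕ) (f : Module.Basis (Fin r) S M)
    (b : Fin r → Fin r → S)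
    (hb : ∀ k j : Fin r, b k j ∈ ⨆ (i : ℕ) (_ : 0 < i), 𝒜 i) :
    ∃ e : Module.Basis (Fin r) S M,
      ∀ j : Fin r,
        e j = ∑ k : Fin r, ((((j : ℕ) ^ (k : ℕ) : ℕ) : S) + b k j) • f k := by
  let A : Matrix (Fin r) (Fin r) S := fun k j => (((j : ℕ) ^ (k : ℕ) : ℕ) : S) + b k j
  let V : Matrix (Fin r) (Fin r) S := (vandermonde fun j : Fin r => ((j : ℕ) : S))ᵀ
  have hV : IsUnit V.det := by
    rw [det_transpose]
    exact isUnit_det_vandermonde_natCast Fin.val_injective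
  have hAV : ∀ k j, IsNilpotent (A k j - V k j) := fun k j => by
    simpa [A, V] using mem_nilradical.1 (iSup_pos_le_nilradical 𝒜 hvanish (hb k j))
  exact f.exists_basis_of_isUnit_det (isUnit_det_of_isNilpotent_sub hV hAV)
end

section
/- Let B be a smooth manifold. Define Γ(B) = Z^even(B,ℝ) ⊕ (Ω^odd(B,ℝ)/Im d) with multiplication (ω₁,φ₁)*(ω₂,φ₂) = (ω₁∧ω₂, ω₁∧φ₂ + φ₁∧ω₂ − dφ₁∧φ₂). Then this multiplication is well-defined (independent of representatives modulo exact forms), commutative, and associative, and (1,0) is a multiplicative identity. -/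
/-! Even forms are central and closed ones pass through `d`, so by the Leibniz rule each defect
of the second component is exact: changing `φ₁` by `dη` changes it by `d(η ω₂)`, changing `φ₂` by
`dη` changes it by `d(ω₁ η - dφ₁ η)`, and swapping the factors changes it by `d(φ₂ φ₁)`. After
expanding `d` of the second component, associativity even holds on the nose. -/

/-- The even part `⊕ᵢ A^{2i}` of a graded algebra. -/
def evenPart {A : Type} [Ring A] [Algebra ℝ A] (grade : ℕ → Submodule ℝ A) :
    Submodule ℝ A :=
  ⨆ i : ℕ, grade (2 * i)

/-- The odd part `⊕ᵢ A^{2i+1}` of a graded algebra. -/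
def oddPart {A : Type} [Ring A] [Algebra ℝ A] (grade : ℕ → Submodule ℝ A) :
    Submodule ℝ A :=
  ⨆ i : ℕ, grade (2 * i + 1)

/-- The product `(ω₁,φ₁)*(ω₂,φ₂) = (ω₁∧ω₂, ω₁∧φ₂ + φ₁∧ω₂ − dφ₁∧φ₂)` on pairs
(representatives of elements of `Γ(B) = Z^even ⊕ Ω^odd/Im d`). -/
def gammaMul {A : Type} [Ring A] [Algebra ℝ A] (d : A →ₗ[ℝ] A) (p q : A × A) :
    A × A :=
  (p.1 * q.1, p.1 * q.2 + p.2 * q.1 - d p.2 * q.2)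

section Graded

variable {R A : Type*} [CommRing R] [Ring A] [Algebra R A] {grade : ℕ → Submodule R A}

def IsGradedCommutative (grade : ℕ → Submodule R A) : Prop :=
  ∀ (i j : ℕ) (x y : A), x ∈ grade i → y ∈ grade j → x * y = ((-1 : R) ^ (i * j)) • (y * x)

def IsGradedLeibniz (grade : ℕ → Submodule R A) (d : A →ₗ[R] A) : Prop :=
  ∀ (i : ℕ) (x y : A), x ∈ grade i → d (x * y) = d x * y + ((-1 : R) ^ i) • (x * d y)

theorem mul_mem_of_mem_iSup_grade [SetLike.GradedMul grade] {ι κ : Type*} {f : ι → ℕ}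
    {g : κ → ℕ} {x y : A} (hx : x ∈ ⨆ i, grade (f i)) (hy : y ∈ ⨆ j, grade (g j))
    {S : Submodule R A} (hS : ∀ i j, grade (f i + g j) ≤ S) : x * y ∈ S := by
  have hle : (⨆ i, grade (f i)) * (⨆ j, grade (g j)) ≤ S := by
    rw [Submodule.iSup_mul, iSup_le_iff]
    refine fun i => (Submodule.mul_iSup _ _).trans_le (iSup_le fun j => ?_)
    exact Submodule.mul_le.2 fun a ha b hb => hS i j (SetLike.mul_mem_graded ha hb)
  exact hle (Submodule.mul_mem_mul hx hy)

theorem IsGradedCommutative.commute_of_mem_iSup (h : IsGradedCommutative grade) {ι κ : Type*}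
    {f : ι → ℕ} {g : κ → ℕ} (hfg : ∀ i j, Even (f i * g j)) {x y : A}
    (hx : x ∈ ⨆ i, grade (f i)) (hy : y ∈ ⨆ j, grade (g j)) : Commute x y := by
  induction hx using Submodule.iSup_induction' with
  | mem i a ha =>
    induction hy using Submodule.iSup_induction' with
    | mem j b hb => rw [Commute, SemiconjBy, h _ _ a b ha hb, (hfg i j).neg_one_pow, one_smul]
    | zero => exact Commute.zero_right a
    | add b c _ _ hb hc => exact hb.add_right hc
  | zero => exact Commute.zero_left y
  | add a b _ _ ha hb => exact ha.add_left hb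

theorem IsGradedLeibniz.map_mul_of_mem_iSup {d : A →ₗ[R] A} (h : IsGradedLeibniz grade d)
    {ι : Type*} {f : ι → ℕ} {s : R} (hf : ∀ i, (-1 : R) ^ f i = s) {x : A}
    (hx : x ∈ ⨆ i, grade (f i)) (y : A) : d (x * y) = d x * y + s • (x * d y) := by
  induction hx using Submodule.iSup_induction' with
  | mem i a ha => rw [h _ a y ha, hf]
  | zero => simp
  | add a b _ _ ha hb => simp only [add_mul, map_add, ha, hb, smul_add]; abel

end Graded

section EvenOdd

variable {A : Type} [Ring A] [Algebra ℝ A] {grade : ℕ → Submodule ℝ A}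

section Mul

variable [SetLike.GradedMul grade] {x y : A}

theorem mul_mem_evenPart_of_even_even (hx : x ∈ evenPart grade) (hy : y ∈ evenPart grade) :
    x * y ∈ evenPart grade :=
  mul_mem_of_mem_iSup_grade hx hy fun i j => le_iSup_of_le (i + j) (congrArg grade (by ring)).le

theorem mul_mem_oddPart_of_even_odd (hx : x ∈ evenPart grade) (hy : y ∈ oddPart grade) :
    x * y ∈ oddPart grade :=
  mul_mem_of_mem_iSup_grade hx hy fun i j => le_iSup_of_le (i + j) (congrArg grade (by ring)).le

theorem mul_mem_oddPart_of_odd_even (hx : x ∈ oddPart grade) (hy : y ∈ evenPart grade) :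
    x * y ∈ oddPart grade :=
  mul_mem_of_mem_iSup_grade hx hy fun i j => le_iSup_of_le (i + j) (congrArg grade (by ring)).le

theorem mul_mem_evenPart_of_odd_odd (hx : x ∈ oddPart grade) (hy : y ∈ oddPart grade) :
    x * y ∈ evenPart grade :=
  mul_mem_of_mem_iSup_grade hx hy fun i j => le_iSup_of_le (i + j + 1) (congrArg grade (by ring)).le

end Mul

theorem map_mem_evenPart_of_mem_oddPart {d : A →ₗ[ℝ] A}
    (hd : ∀ i, ∀ x ∈ grade i, d x ∈ grade (i + 1)) {x : A} (hx : x ∈ oddPart grade) :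
    d x ∈ evenPart grade := by
  have hle : oddPart grade ≤ (evenPart grade).comap d :=
    iSup_le fun i a ha => Submodule.mem_iSup_of_mem (i + 1) (hd _ a ha)
  exact hle hx

theorem IsGradedCommutative.commute_of_mem_evenPart (h : IsGradedCommutative grade)
    {ι : Type*} {g : ι → ℕ} {x y : A} (hx : x ∈ evenPart grade) (hy : y ∈ ⨆ j, grade (g j)) :
    Commute x y :=
  h.commute_of_mem_iSup (fun i _ => (even_two_mul i).mul_right _) hx hy

variable {d : A →ₗ[ℝ] A}

theorem IsGradedLeibniz.map_mul_of_mem_evenPart (h : IsGradedLeibniz grade d) {x : A}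
    (hx : x ∈ evenPart grade) (y : A) : d (x * y) = d x * y + x * d y := by
  rw [h.map_mul_of_mem_iSup (fun i => (even_two_mul i).neg_one_pow) hx, one_smul]

theorem IsGradedLeibniz.map_mul_of_mem_oddPart (h : IsGradedLeibniz grade d) {x : A}
    (hx : x ∈ oddPart grade) (y : A) : d (x * y) = d x * y - x * d y := by
  rw [h.map_mul_of_mem_iSup (fun i => (odd_two_mul_add_one i).neg_one_pow) hx, neg_one_smul,
    sub_eq_add_neg]

end EvenOdd

section GammaMul

variable {A : Type} [Ring A] [Algebra ℝ A] {grade : ℕ → Submodule ℝ A} {d : A →ₗ[ℝ] A}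

@[simp]
theorem gammaMul_one_left (d : A →ₗ[ℝ] A) (p : A × A) : gammaMul d (1, 0) p = p := by
  simp [gammaMul]

theorem IsGradedLeibniz.mul_mem_evenPart_inf_ker [SetLike.GradedMul grade]
    (hd : IsGradedLeibniz grade d) {x y : A} (hx : x ∈ evenPart grade ⊓ LinearMap.ker d)
    (hy : y ∈ evenPart grade ⊓ LinearMap.ker d) : x * y ∈ evenPart grade ⊓ LinearMap.ker d := by
  refine ⟨mul_mem_evenPart_of_even_even hx.1 hy.1, ?_⟩
  change d (x * y) = 0
  rw [hd.map_mul_of_mem_evenPart hx.1, LinearMap.mem_ker.1 hx.2, LinearMap.mem_ker.1 hy.2,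
    zero_mul, mul_zero, add_zero]

theorem gammaMul_snd_mem_oddPart [SetLike.GradedMul grade]
    (hd_grade : ∀ i, ∀ x ∈ grade i, d x ∈ grade (i + 1)) {ω₁ ω₂ φ₁ φ₂ : A}
    (hω₁ : ω₁ ∈ evenPart grade) (hω₂ : ω₂ ∈ evenPart grade)
    (hφ₁ : φ₁ ∈ oddPart grade) (hφ₂ : φ₂ ∈ oddPart grade) :
    (gammaMul d (ω₁, φ₁) (ω₂, φ₂)).2 ∈ oddPart grade :=
  sub_mem (add_mem (mul_mem_oddPart_of_even_odd hω₁ hφ₂) (mul_mem_oddPart_of_odd_even hφ₁ hω₂))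
    (mul_mem_oddPart_of_even_odd (map_mem_evenPart_of_mem_oddPart hd_grade hφ₁) hφ₂)

theorem gammaMul_snd_sub_mem_of_sub_mem_left [SetLike.GradedMul grade]
    (hd : IsGradedLeibniz grade d) (hd_sq : ∀ x, d (d x) = 0) {ω₁ ω₂ φ₁ φ₁' φ₂ : A}
    (hω₂ : ω₂ ∈ evenPart grade ⊓ LinearMap.ker d)
    (hφ : φ₁' - φ₁ ∈ (evenPart grade).map d) :
    (gammaMul d (ω₁, φ₁') (ω₂, φ₂)).2 - (gammaMul d (ω₁, φ₁) (ω₂, φ₂)).2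
      ∈ (evenPart grade).map d := by
  obtain ⟨η, hη, hdη⟩ := hφ
  refine ⟨η * ω₂, mul_mem_evenPart_of_even_even hη hω₂.1, ?_⟩
  have hdφ : d φ₁' = d φ₁ := sub_eq_zero.1 (by rw [← map_sub, ← hdη, hd_sq])
  rw [hd.map_mul_of_mem_evenPart hη, LinearMap.mem_ker.1 hω₂.2, mul_zero, add_zero, hdη]
  simp only [gammaMul, hdφ]
  noncomm_ring

theorem gammaMul_snd_sub_mem_of_sub_mem_right [SetLike.GradedMul grade]
    (hd : IsGradedLeibniz grade d) (hd_grade : ∀ i, ∀ x ∈ grade i, d x ∈ grade (i + 1))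
    (hd_sq : ∀ x, d (d x) = 0) {ω₁ ω₂ φ₁ φ₂ φ₂' : A}
    (hω₁ : ω₁ ∈ evenPart grade ⊓ LinearMap.ker d) (hφ₁ : φ₁ ∈ oddPart grade)
    (hφ : φ₂' - φ₂ ∈ (evenPart grade).map d) :
    (gammaMul d (ω₁, φ₁) (ω₂, φ₂')).2 - (gammaMul d (ω₁, φ₁) (ω₂, φ₂)).2
      ∈ (evenPart grade).map d := by
  obtain ⟨η, hη, hdη⟩ := hφ
  have hdφ₁ := map_mem_evenPart_of_mem_oddPart hd_grade hφ₁
  refine ⟨ω₁ * η - d φ₁ * η, sub_mem (mul_mem_evenPart_of_even_even hω₁.1 hη)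
    (mul_mem_evenPart_of_even_even hdφ₁ hη), ?_⟩
  rw [map_sub, hd.map_mul_of_mem_evenPart hω₁.1, hd.map_mul_of_mem_evenPart hdφ₁,
    LinearMap.mem_ker.1 hω₁.2, hd_sq, hdη]
  simp only [gammaMul]
  noncomm_ring

theorem gammaMul_snd_sub_gammaMul_snd_swap_mem [SetLike.GradedMul grade]
    (hcomm : IsGradedCommutative grade) (hd : IsGradedLeibniz grade d)
    (hd_grade : ∀ i, ∀ x ∈ grade i, d x ∈ grade (i + 1)) {ω₁ ω₂ φ₁ φ₂ : A}
    (hω₁ : ω₁ ∈ evenPart grade) (hω₂ : ω₂ ∈ evenPart grade)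
    (hφ₁ : φ₁ ∈ oddPart grade) (hφ₂ : φ₂ ∈ oddPart grade) :
    (gammaMul d (ω₁, φ₁) (ω₂, φ₂)).2 - (gammaMul d (ω₂, φ₂) (ω₁, φ₁)).2
      ∈ (evenPart grade).map d := by
  refine ⟨φ₂ * φ₁, mul_mem_evenPart_of_odd_odd hφ₂ hφ₁, ?_⟩
  have hdφ₁ := map_mem_evenPart_of_mem_oddPart hd_grade hφ₁
  simp only [gammaMul]
  rw [hd.map_mul_of_mem_oddPart hφ₂, ← (hcomm.commute_of_mem_evenPart hdφ₁ hφ₂).eq,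
    (hcomm.commute_of_mem_evenPart hω₁ hφ₂).eq, ← (hcomm.commute_of_mem_evenPart hω₂ hφ₁).eq]
  noncomm_ring

theorem gammaMul_snd_assoc (hd : IsGradedLeibniz grade d)
    (hd_grade : ∀ i, ∀ x ∈ grade i, d x ∈ grade (i + 1)) (hd_sq : ∀ x, d (d x) = 0)
    {ω₁ ω₂ ω₃ φ₁ φ₂ φ₃ : A} (hω₁ : ω₁ ∈ evenPart grade ⊓ LinearMap.ker d)
    (hω₂ : ω₂ ∈ LinearMap.ker d) (hφ₁ : φ₁ ∈ oddPart grade) :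
    (gammaMul d (gammaMul d (ω₁, φ₁) (ω₂, φ₂)) (ω₃, φ₃)).2
      = (gammaMul d (ω₁, φ₁) (gammaMul d (ω₂, φ₂) (ω₃, φ₃))).2 := by
  have hdω₁φ₂ : d (ω₁ * φ₂) = ω₁ * d φ₂ := by
    rw [hd.map_mul_of_mem_evenPart hω₁.1, LinearMap.mem_ker.1 hω₁.2, zero_mul, zero_add]
  have hdφ₁ω₂ : d (φ₁ * ω₂) = d φ₁ * ω₂ := by
    rw [hd.map_mul_of_mem_oddPart hφ₁, LinearMap.mem_ker.1 hω₂, mul_zero, sub_zero]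
  have hddφ₁φ₂ : d (d φ₁ * φ₂) = d φ₁ * d φ₂ := by
    rw [hd.map_mul_of_mem_evenPart (map_mem_evenPart_of_mem_oddPart hd_grade hφ₁), hd_sq,
      zero_mul, zero_add]
  simp only [gammaMul, map_sub, map_add, hdω₁φ₂, hdφ₁ω₂, hddφ₁φ₂]
  noncomm_ring

end GammaMul

/-- for a graded-commutative differential graded algebra `A`
(abstracting the de Rham algebra `Ω^•(B,ℝ)` of a smooth manifold `B`, with
exterior derivative `d`), the product on
`Γ(B) = Z^even ⊕ (Ω^odd / Im d)` given by
`(ω₁,φ₁)*(ω₂,φ₂) = (ω₁∧ω₂, ω₁∧φ₂+φ₁∧ω₂−dφ₁∧φ₂)` is well defined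
(independent of the representative of `φ` modulo exact forms, with values
again in `Z^even × Ω^odd` up to exacts), commutative and associative modulo
exact forms, and `(1,0)` is a multiplicative identity. -/
theorem gammaMul_wellDefined_comm_assoc_one
    {A : Type} [Ring A] [Algebra ℝ A]
    (grade : ℕ → Submodule ℝ A) [GradedAlgebra grade]
    (supercomm : ∀ (i j : ℕ) (x y : A), x ∈ grade i → y ∈ grade j →
      x * y = ((-1 : ℝ) ^ (i * j)) • (y * x))
    (d : A →ₗ[ℝ] A)
    (d_grade : ∀ i : ℕ, ∀ x ∈ grade i, d x ∈ grade (i + 1))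
    (d_sq : ∀ x : A, d (d x) = 0)
    (leibniz : ∀ (i : ℕ) (x y : A), x ∈ grade i →
      d (x * y) = d x * y + ((-1 : ℝ) ^ i) • (x * d y)) :
    ∀ ω₁ ω₂ ω₃ φ₁ φ₂ φ₃ : A,
      ω₁ ∈ evenPart grade ⊓ LinearMap.ker d →
      ω₂ ∈ evenPart grade ⊓ LinearMap.ker d →
      ω₃ ∈ evenPart grade ⊓ LinearMap.ker d →
      φ₁ ∈ oddPart grade → φ₂ ∈ oddPart grade → φ₃ ∈ oddPart grade →
      -- the product of cycles is again a cycle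
      ((gammaMul d (ω₁, φ₁) (ω₂, φ₂)).1 ∈ evenPart grade ⊓ LinearMap.ker d ∧
        (gammaMul d (ω₁, φ₁) (ω₂, φ₂)).2 ∈ oddPart grade) ∧
      -- well-definedness in the first odd variable
      (∀ φ₁' ∈ oddPart grade,
        φ₁' - φ₁ ∈ Submodule.map d (evenPart grade) →
          (gammaMul d (ω₁, φ₁') (ω₂, φ₂)).1 = (gammaMul d (ω₁, φ₁) (ω₂, φ₂)).1 ∧
          (gammaMul d (ω₁, φ₁') (ω₂, φ₂)).2 - (gammaMul d (ω₁, φ₁) (ω₂, φ₂)).2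
            ∈ Submodule.map d (evenPart grade)) ∧
      -- well-definedness in the second odd variable
      (∀ φ₂' ∈ oddPart grade,
        φ₂' - φ₂ ∈ Submodule.map d (evenPart grade) →
          (gammaMul d (ω₁, φ₁) (ω₂, φ₂')).1 = (gammaMul d (ω₁, φ₁) (ω₂, φ₂)).1 ∧
          (gammaMul d (ω₁, φ₁) (ω₂, φ₂')).2 - (gammaMul d (ω₁, φ₁) (ω₂, φ₂)).2
            ∈ Submodule.map d (evenPart grade)) ∧
      -- commutativity (modulo exact forms)
      ((gammaMul d (ω₁, φ₁) (ω₂, φ₂)).1 = (gammaMul d (ω₂, φ₂) (ω₁, φ₁)).1 ∧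
        (gammaMul d (ω₁, φ₁) (ω₂, φ₂)).2 - (gammaMul d (ω₂, φ₂) (ω₁, φ₁)).2
          ∈ Submodule.map d (evenPart grade)) ∧
      -- associativity (modulo exact forms)
      ((gammaMul d (gammaMul d (ω₁, φ₁) (ω₂, φ₂)) (ω₃, φ₃)).1
          = (gammaMul d (ω₁, φ₁) (gammaMul d (ω₂, φ₂) (ω₃, φ₃))).1 ∧
        (gammaMul d (gammaMul d (ω₁, φ₁) (ω₂, φ₂)) (ω₃, φ₃)).2
            - (gammaMul d (ω₁, φ₁) (gammaMul d (ω₂, φ₂) (ω₃, φ₃))).2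
          ∈ Submodule.map d (evenPart grade)) ∧
      -- `(1, 0)` is a multiplicative identity
      gammaMul d (1, 0) (ω₁, φ₁) = (ω₁, φ₁) := by
  intro ω₁ ω₂ ω₃ φ₁ φ₂ φ₃ hω₁ hω₂ _ hφ₁ hφ₂ _
  refine ⟨⟨IsGradedLeibniz.mul_mem_evenPart_inf_ker leibniz hω₁ hω₂,
      gammaMul_snd_mem_oddPart d_grade hω₁.1 hω₂.1 hφ₁ hφ₂⟩,
    fun _ _ h => ⟨rfl, gammaMul_snd_sub_mem_of_sub_mem_left leibniz d_sq hω₂ h⟩,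
    fun _ _ h => ⟨rfl, gammaMul_snd_sub_mem_of_sub_mem_right leibniz d_grade d_sq hω₁ hφ₁ h⟩,
    ⟨(IsGradedCommutative.commute_of_mem_evenPart supercomm hω₁.1 hω₂.1).eq,
      gammaMul_snd_sub_gammaMul_snd_swap_mem supercomm leibniz d_grade hω₁.1 hω₂.1 hφ₁ hφ₂⟩,
    ⟨mul_assoc ω₁ ω₂ ω₃, ?_⟩, gammaMul_one_left d (ω₁, φ₁)⟩
  rw [gammaMul_snd_assoc leibniz d_grade d_sq hω₁ hω₂.2 hφ₁, sub_self]
  exact zero_mem _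
end
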